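/- arXiv:2504.00330 — 3 statements merged into one kernel-verified Lean document; each statement's English description precedes it below -/
import Mathlib

section
/- Let d_1, ..., d_s ≥ 0, 0 < k ≤ 1, l ∈ ℝ, and suppose the (s+1)×(s+1) real symmetric matrix M with block form M = [[k − 1 − 2l eᵀDe, eᵀD − bᵀ − 2l eᵀDA], [De − b − 2l AᵀDe, DA + AᵀD − bbᵀ − 2l AᵀDA]] is positive semidefinite (D = diag(d_i), e the all-ones vector). Let w_n ∈ ℂ^N, Q_1, ..., Q_s ∈ ℂ^N, h > 0, define W_i = w_n + h∑_j a_{ij}Q_j and w_{n+1} = w_n + h∑_j b_j Q_j. Then ‖w_{n+1}‖² ≤ k‖w_n‖² + 2∑_{j=1}^s d_j Re⟨W_j, hQ_j − lW_j⟩. -/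
/-!
Write `θ = (w_n, hQ_1, …, hQ_s)`. Then `w_n`, `w_{n+1}`, `W_j` and `hQ_j` are the combinations of
`θ` with coefficient vectors `e₀ = (1, 0)`, `u = (1, b)`, `α_j = (1, A_j)` and `ε_j = (0, e_j)`,
and `M = k e₀e₀ᵀ - uuᵀ + ∑_j d_j (α_j ε_jᵀ + ε_j α_jᵀ - 2l α_j α_jᵀ)`. Pairing `M` against the
Gram matrix `Re⟨θ_i, θ_j⟩` therefore gives `k‖w_n‖² + 2∑_j d_j Re⟨W_j, hQ_j - lW_j⟩ - ‖w_{n+1}‖²`.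
This pairing is nonnegative: writing `M = BᵀB` splits it into the squared norms `‖∑_i B_{ki} θ_i‖²`.
-/

open Finset Matrix RCLike
open scoped InnerProductSpace MatrixOrder

section GramPairing

variable (𝕜 : Type*) {E ι : Type*} [RCLike 𝕜] [SeminormedAddCommGroup E] [InnerProductSpace 𝕜 E]
  [Fintype ι]

def gramPairing (v : ι → E) : Matrix ι ι ℝ →ₗ[ℝ] ℝ where
  toFun X := ∑ i, ∑ j, X i j * re ⟪v i, v j⟫_𝕜
  map_add' X Y := by simp only [Matrix.add_apply, add_mul, sum_add_distrib]
  map_smul' c X := by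
    simp only [Matrix.smul_apply, smul_eq_mul, mul_assoc, ← mul_sum, RingHom.id_apply]

variable {𝕜}

lemma gramPairing_vecMulVec (v : ι → E) (x y : ι → ℝ) :
    gramPairing 𝕜 v (vecMulVec x y) = re ⟪∑ i, (x i : 𝕜) • v i, ∑ j, (y j : 𝕜) • v j⟫_𝕜 := by
  simp_rw [sum_inner, inner_sum, inner_smul_real_left, inner_smul_real_right, map_sum, smul_re]
  simp only [gramPairing, LinearMap.coe_mk, AddHom.coe_mk, vecMulVec_apply, mul_assoc]

lemma Matrix.PosSemidef.gramPairing_nonneg {M : Matrix ι ι ℝ} (hM : M.PosSemidef) (v : ι → E) :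
    0 ≤ gramPairing 𝕜 v M := by
  classical
  obtain ⟨B, rfl⟩ := CStarAlgebra.nonneg_iff_eq_star_mul_self.mp hM.nonneg
  have hB : star B * B = ∑ k, vecMulVec (B k) (B k) := by
    ext i j
    simp [mul_apply, vecMulVec_apply, Matrix.sum_apply]
  rw [hB, map_sum]
  exact sum_nonneg fun k _ => by rw [gramPairing_vecMulVec]; exact inner_self_nonneg

end GramPairing

section RungeKutta

variable {σ : Type*} [Fintype σ]

def klStabilityMatrix (A : Matrix σ σ ℝ) (b d : σ → ℝ) (k l : ℝ) :
    Matrix (Fin 1 ⊕ σ) (Fin 1 ⊕ σ) ℝ :=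
  fromBlocks
    (of fun (_ : Fin 1) (_ : Fin 1) => k - 1 - 2 * l * ∑ i, d i)
    (of fun (_ : Fin 1) (j : σ) => d j - b j - 2 * l * ∑ i, d i * A i j)
    (of fun (i : σ) (_ : Fin 1) => d i - b i - 2 * l * ∑ j, A j i * d j)
    (of fun (i : σ) (j : σ) =>
      d i * A i j + A j i * d j - b i * b j - 2 * l * ∑ p, A p i * d p * A p j)

lemma klStabilityMatrix_eq [DecidableEq σ] (A : Matrix σ σ ℝ) (b d : σ → ℝ) (k l : ℝ) :
    klStabilityMatrix A b d k l =
      k • vecMulVec (Sum.elim 1 0) (Sum.elim 1 0) - vecMulVec (Sum.elim 1 b) (Sum.elim 1 b)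
        + ∑ j, d j • (vecMulVec (Sum.elim 1 (A j)) (Sum.elim 0 (Pi.single j 1))
          + vecMulVec (Sum.elim 0 (Pi.single j 1)) (Sum.elim 1 (A j))
          - (2 * l) • vecMulVec (Sum.elim 1 (A j)) (Sum.elim 1 (A j))) := by
  ext (i | i) (j | j) <;>
  simp only [klStabilityMatrix, fromBlocks_apply₁₁, fromBlocks_apply₁₂, fromBlocks_apply₂₁,
      fromBlocks_apply₂₂, of_apply, Sum.elim_zero_single, Matrix.add_apply, Matrix.sub_apply,
      Matrix.smul_apply, Matrix.sum_apply, vecMulVec_apply, Sum.elim_inl, Sum.elim_inr, Pi.one_apply,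
      Pi.zero_apply, Pi.single_apply, Sum.inr.injEq, reduceCtorEq, if_false, mul_ite, ite_mul,
      mul_one, one_mul, mul_zero, zero_mul, smul_eq_mul, mul_sub, mul_add, mul_sum, sum_sub_distrib,
      sum_add_distrib, sum_ite_eq, mem_univ, if_true, sum_const_zero] <;>
    ring_nf <;> simp only [mul_comm, mul_left_comm]

variable (𝕜 : Type*) {E : Type*} [RCLike 𝕜] [SeminormedAddCommGroup E] [InnerProductSpace 𝕜 E]

def stepVectors (w : E) (h : ℝ) (Q : σ → E) : Fin 1 ⊕ σ → E :=
  Sum.elim (fun _ => w) fun j => (h : 𝕜) • Q j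

variable {𝕜}

lemma sum_smul_stepVectors (w : E) (h : ℝ) (Q : σ → E) (c : Fin 1 → ℝ) (x : σ → ℝ) :
    ∑ i, ((Sum.elim c x i : ℝ) : 𝕜) • stepVectors 𝕜 w h Q i
      = (c 0 : 𝕜) • w + (h : 𝕜) • ∑ j, (x j : 𝕜) • Q j := by
  simp [stepVectors, Fintype.sum_sum_type, smul_sum, smul_comm (h : 𝕜)]

lemma gramPairing_stepVectors_klStabilityMatrix (A : Matrix σ σ ℝ) (b d : σ → ℝ) (k l h : ℝ)
    (w w' : E) (W Q : σ → E) (hW : ∀ i, W i = w + (h : 𝕜) • ∑ j, (A i j : 𝕜) • Q j)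
    (hw' : w' = w + (h : 𝕜) • ∑ j, (b j : 𝕜) • Q j) :
    gramPairing 𝕜 (stepVectors 𝕜 w h Q) (klStabilityMatrix A b d k l)
      = k * ‖w‖ ^ 2 + 2 * ∑ j, d j * re ⟪W j, (h : 𝕜) • Q j - (l : 𝕜) • W j⟫_𝕜 - ‖w'‖ ^ 2 := by
  classical
  rw [klStabilityMatrix_eq]
  simp only [map_add, map_sub, map_smul, map_sum, gramPairing_vecMulVec, sum_smul_stepVectors]
  simp only [Pi.one_apply, Pi.zero_apply, Pi.single_apply, map_one, map_zero, one_smul, zero_smul,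
    sum_const_zero, smul_zero, add_zero, zero_add, MonoidWithZeroHom.map_ite_one_zero, ite_smul,
    sum_ite_eq', mem_univ, if_true, ← hw', ← hW, inner_self_eq_norm_sq_to_K, re_ofReal_pow, smul_eq_mul]
  have hterm : ∀ j, re ⟪W j, (h : 𝕜) • Q j⟫_𝕜 + re ⟪(h : 𝕜) • Q j, W j⟫_𝕜 - 2 * l * ‖W j‖ ^ 2
      = 2 * re ⟪W j, (h : 𝕜) • Q j - (l : 𝕜) • W j⟫_𝕜 := fun j => by
    rw [inner_re_symm ((h : 𝕜) • Q j), inner_sub_right, map_sub]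
    simp only [inner_smul_real_right, smul_re, inner_self_eq_norm_sq]
    ring
  simp only [hterm, mul_sum]
  ring_nf

theorem norm_sq_le_of_klStabilityMatrix_posSemidef (A : Matrix σ σ ℝ) (b d : σ → ℝ) (k l : ℝ)
    (hM : (klStabilityMatrix A b d k l).PosSemidef) (h : ℝ) (w w' : E) (W Q : σ → E)
    (hW : ∀ i, W i = w + (h : 𝕜) • ∑ j, (A i j : 𝕜) • Q j)
    (hw' : w' = w + (h : 𝕜) • ∑ j, (b j : 𝕜) • Q j) :
    ‖w'‖ ^ 2 ≤ k * ‖w‖ ^ 2 + 2 * ∑ j, d j * re ⟪W j, (h : 𝕜) • Q j - (l : 𝕜) • W j⟫_𝕜 := by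
  have hnonneg := hM.gramPairing_nonneg (𝕜 := 𝕜) (stepVectors 𝕜 w h Q)
  rw [gramPairing_stepVectors_klStabilityMatrix A b d k l h w w' W Q hW hw'] at hnonneg
  linarith

end RungeKutta

theorem stmt_11_general (s N : ℕ) (A : Matrix (Fin s) (Fin s) ℝ) (b : Fin s → ℝ)
    (d : Fin s → ℝ) (k l : ℝ)
    (hM : (Matrix.fromBlocks
        (Matrix.of fun (_ : Fin 1) (_ : Fin 1) => k - 1 - 2 * l * ∑ i, d i)
        (Matrix.of fun (_ : Fin 1) (j : Fin s) => d j - b j - 2 * l * ∑ i, d i * A i j)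
        (Matrix.of fun (i : Fin s) (_ : Fin 1) => d i - b i - 2 * l * ∑ j, A j i * d j)
        (Matrix.of fun (i : Fin s) (j : Fin s) =>
          d i * A i j + A j i * d j - b i * b j - 2 * l * ∑ p, A p i * d p * A p j)).PosSemidef)
    (h : ℝ) (wn : EuclideanSpace ℂ (Fin N))
    (W Q : Fin s → EuclideanSpace ℂ (Fin N))
    (wn1 : EuclideanSpace ℂ (Fin N))
    (hstage : ∀ i, W i = wn + h • ∑ j, A i j • Q j)
    (hupdate : wn1 = wn + h • ∑ j, b j • Q j) :
    ‖wn1‖ ^ 2 ≤ k * ‖wn‖ ^ 2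
      + 2 * ∑ j, d j * (inner ℂ (W j) ((h : ℂ) • Q j - (l : ℂ) • W j) : ℂ).re := by
  simp only [real_smul_eq_coe_smul (K := ℂ)] at hstage hupdate
  exact norm_sq_le_of_klStabilityMatrix_posSemidef A b d k l hM h wn wn1 W Q hstage hupdate

/-- `(k,l)`-algebraic stability implies the one-step estimate
`‖w_{n+1}‖² ≤ k‖w_n‖² + 2 ∑_j d_j Re⟨W_j, hQ_j − lW_j⟩`. -/
theorem stmt_11 (s N : ℕ) (A : Matrix (Fin s) (Fin s) ℝ) (b : Fin s → ℝ)
    (d : Fin s → ℝ) (hd : ∀ j, 0 ≤ d j) (k l : ℝ) (hk0 : 0 < k) (hk1 : k ≤ 1)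
    (hM : (Matrix.fromBlocks
        (Matrix.of fun (_ : Fin 1) (_ : Fin 1) => k - 1 - 2 * l * ∑ i, d i)
        (Matrix.of fun (_ : Fin 1) (j : Fin s) => d j - b j - 2 * l * ∑ i, d i * A i j)
        (Matrix.of fun (i : Fin s) (_ : Fin 1) => d i - b i - 2 * l * ∑ j, A j i * d j)
        (Matrix.of fun (i : Fin s) (j : Fin s) =>
          d i * A i j + A j i * d j - b i * b j - 2 * l * ∑ p, A p i * d p * A p j)).PosSemidef)
    (h : ℝ) (hh : 0 < h) (wn : EuclideanSpace ℂ (Fin N))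
    (W Q : Fin s → EuclideanSpace ℂ (Fin N))
    (wn1 : EuclideanSpace ℂ (Fin N))
    (hstage : ∀ i, W i = wn + h • ∑ j, A i j • Q j)
    (hupdate : wn1 = wn + h • ∑ j, b j • Q j) :
    ‖wn1‖ ^ 2 ≤ k * ‖wn‖ ^ 2
      + 2 * ∑ j, d j * (inner ℂ (W j) ((h : ℂ) • Q j - (l : ℂ) • W j) : ℂ).re :=
  stmt_11_general s N A b d k l hM h wn W Q wn1 hstage hupdate
end

section
/- Classical Halanay inequality: let τ > 0, A > B ≥ 0, and let y : [t₀−τ, ∞) → ℝ≥0 be continuous, differentiable on [t₀, ∞), with y'(t) ≤ −A y(t) + B sup_{ξ∈[t−τ,t]} y(ξ) for all t ≥ t₀. Then there exists δ > 0 such that y(t) ≤ (sup_{ξ∈[t₀−τ,t₀]} y(ξ)) · e^{−δ(t−t₀)} for all t ≥ t₀; in particular y(t) → 0. -/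
open Set Filter Topology

/-! Compare `y` with `w t = c e^{-δ(t-t₀)}` for every `c` above the initial supremum, where
`δ > 0` is so small that `δ + B e^{δτ} < A`. At a first time `t > t₀` where `y` reaches `w`, the
delayed supremum is at most `w (t - τ) = w t e^{δτ}`, so `y' t ≤ (B e^{δτ} - A) w t < -δ w t = w' t`,
which is impossible since `y - w` increases to `0` from below. Letting `c` decrease to the
initial supremum gives the bound. -/

theorem exists_pos_add_mul_exp_lt {A B : ℝ} (hAB : B < A) (τ : ℝ) :
    ∃ δ : ℝ, 0 < δ ∧ δ + B * Real.exp (δ * τ) < A := by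
  have hcont : ContinuousAt (fun δ : ℝ => δ + B * Real.exp (δ * τ)) 0 := by fun_prop
  have hev : ∀ᶠ δ in 𝓝[>] (0 : ℝ), δ + B * Real.exp (δ * τ) < A :=
    nhdsWithin_le_nhds (hcont.eventually_lt continuousAt_const (by simpa using hAB))
  exact (eventually_mem_nhdsWithin.and hev).exists

theorem HasDerivAt.nonneg_of_lt_left {f : ℝ → ℝ} {f' x a : ℝ} (hf : HasDerivAt f f' x)
    (ha : a < x) (hlt : ∀ s ∈ Ioo a x, f s < f x) : 0 ≤ f' := by
  refine ge_of_tendsto (hf.tendsto_slope.mono_left (nhdsLT_le_nhdsNE x)) ?_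
  filter_upwards [Ioo_mem_nhdsLT ha] with s hs
  rw [slope_def_field]
  exact div_nonneg_of_nonpos (sub_nonpos.2 (hlt s hs).le) (sub_nonpos.2 hs.2.le)

theorem lt_of_forall_first_touch {f g : ℝ → ℝ} {a : ℝ} (hf : ContinuousOn f (Ici a))
    (hg : ContinuousOn g (Ici a)) (ha : f a < g a)
    (htouch : ∀ t, a < t → f t = g t → (∀ s ∈ Ico a t, f s < g s) → False) :
    ∀ t, a ≤ t → f t < g t := by
  by_contra! ⟨t₁, ht₁, hle₁⟩
  set S := {t ∈ Ici a | g t ≤ f t}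
  have hS : IsClosed S := isClosed_Ici.isClosed_le hg hf
  have hSbdd : BddBelow S := ⟨a, fun t ht => ht.1⟩
  have hmem : sInf S ∈ S := hS.csInf_mem ⟨t₁, ht₁, hle₁⟩ hSbdd
  have hbefore : ∀ s ∈ Ico a (sInf S), f s < g s := fun s hs =>
    lt_of_not_ge fun hgs => hs.2.not_ge (csInf_le hSbdd ⟨hs.1, hgs⟩)
  have hpos : a < sInf S :=
    lt_of_le_of_ne hmem.1 fun h => (h ▸ hmem.2).not_gt ha
  have hle : f (sInf S) ≤ g (sInf S) := by
    refine ContinuousWithinAt.closure_le (s := Ico a (sInf S)) ?_ ?_ ?_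
      fun s hs => (hbefore s hs).le
    · rw [closure_Ico hpos.ne]; exact right_mem_Icc.2 hpos.le
    · exact (hf _ hmem.1).mono Ico_subset_Ici_self
    · exact (hg _ hmem.1).mono Ico_subset_Ici_self
  exact htouch _ hpos (hle.antisymm hmem.2) hbefore

theorem halanay_lt_of_lt {τ t₀ A B δ c : ℝ} {y y' : ℝ → ℝ} (hτ : 0 ≤ τ) (hB : 0 ≤ B)
    (hδ : 0 ≤ δ) (hδA : δ + B * Real.exp (δ * τ) < A) (hc : 0 < c)
    (hycont : ContinuousOn y (Ici (t₀ - τ)))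
    (hyderiv : ∀ t, t₀ ≤ t → HasDerivAt y (y' t) t)
    (hyineq : ∀ t, t₀ ≤ t → y' t ≤ -A * y t + B * sSup (y '' Icc (t - τ) t))
    (hinit : ∀ t ∈ Icc (t₀ - τ) t₀, y t < c) :
    ∀ t, t₀ - τ ≤ t → y t < c * Real.exp (-δ * (t - t₀)) := by
  set w : ℝ → ℝ := fun t => c * Real.exp (-δ * (t - t₀))
  have hw_pos : ∀ t, 0 < w t := fun t => by positivity
  have hw_anti : Antitone w := fun s t hst =>
    mul_le_mul_of_nonneg_left (Real.exp_le_exp.2 (by nlinarith)) hc.le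
  have hw_deriv : ∀ t, HasDerivAt w (-δ * w t) t := fun t =>
    ((((hasDerivAt_id' t).sub_const t₀).const_mul (-δ)).exp.const_mul c).congr_deriv (by ring)
  have hw_delay : ∀ t, w (t - τ) = w t * Real.exp (δ * τ) := fun t => by
    simp only [w]
    rw [mul_assoc, ← Real.exp_add]
    ring_nf
  have hc_le_w : ∀ t ≤ t₀, c ≤ w t := fun t ht =>
    le_mul_of_one_le_right hc.le (Real.one_le_exp (by nlinarith))
  refine lt_of_forall_first_touch hycont (by fun_prop)
    ((hinit _ ⟨le_rfl, by linarith⟩).trans_le (hc_le_w _ (by linarith))) ?_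
  intro ts hts htouch hbefore
  have hts₀ : t₀ < ts := lt_of_not_ge fun h =>
    ((hinit ts ⟨hts.le, h⟩).trans_le (hc_le_w ts h)).ne htouch
  have hsup : sSup (y '' Icc (ts - τ) ts) ≤ w ts * Real.exp (δ * τ) := by
    rw [← hw_delay]
    refine Real.sSup_le ?_ (hw_pos _).le
    rintro _ ⟨s, hs, rfl⟩
    have hys : y s ≤ w s := by
      rcases hs.2.lt_or_eq with hlt | rfl
      · exact (hbefore s ⟨by linarith [hs.1], hlt⟩).le
      · exact htouch.le
    exact hys.trans (hw_anti hs.1)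
  have hslope : -δ * w ts ≤ y' ts := by
    have := ((hyderiv ts hts₀.le).sub (hw_deriv ts)).nonneg_of_lt_left hts fun s hs => by
      show y s - w s < y ts - w ts
      rw [htouch, sub_self, sub_neg]
      exact hbefore s ⟨hs.1.le, hs.2⟩
    linarith
  have hineq := hyineq ts hts₀.le
  rw [htouch] at hineq
  have hBsup := mul_le_mul_of_nonneg_left hsup hB
  have hneg : (δ + B * Real.exp (δ * τ) - A) * w ts < 0 :=
    mul_neg_of_neg_of_pos (by linarith) (hw_pos ts)
  nlinarith

/-- Classical Halanay inequality: if `y' (t) ≤ −A y(t) + B sup_{[t−τ,t]} y`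
with `A > B ≥ 0`, then `y` decays exponentially:
`y(t) ≤ (sup_{[t₀−τ,t₀]} y) e^{−δ(t−t₀)}` for some `δ > 0`. -/
theorem stmt_13 (τ t₀ A B : ℝ) (hτ : 0 < τ) (hB : 0 ≤ B) (hAB : B < A)
    (y y' : ℝ → ℝ)
    (hycont : ContinuousOn y (Ici (t₀ - τ)))
    (hy0 : ∀ t, t₀ - τ ≤ t → 0 ≤ y t)
    (hyderiv : ∀ t, t₀ ≤ t → HasDerivAt y (y' t) t)
    (hyineq : ∀ t, t₀ ≤ t → y' t ≤ -A * y t + B * sSup (y '' Icc (t - τ) t)) :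
    ∃ δ : ℝ, 0 < δ ∧ ∀ t, t₀ ≤ t →
      y t ≤ sSup (y '' Icc (t₀ - τ) t₀) * Real.exp (-δ * (t - t₀)) := by
  obtain ⟨δ, hδ, hδA⟩ := exists_pos_add_mul_exp_lt hAB τ
  refine ⟨δ, hδ, fun t ht => ?_⟩
  have hbdd : BddAbove (y '' Icc (t₀ - τ) t₀) :=
    (isCompact_Icc.image_of_continuousOn (hycont.mono Icc_subset_Ici_self)).bddAbove
  have hle_sup : ∀ s ∈ Icc (t₀ - τ) t₀, y s ≤ sSup (y '' Icc (t₀ - τ) t₀) := fun s hs =>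
    le_csSup hbdd (mem_image_of_mem y hs)
  have hsup_nonneg : 0 ≤ sSup (y '' Icc (t₀ - τ) t₀) :=
    (hy0 t₀ (by linarith)).trans (hle_sup t₀ ⟨by linarith, le_rfl⟩)
  have hE : 0 < Real.exp (-δ * (t - t₀)) := Real.exp_pos _
  rw [← div_le_iff₀ hE]
  refine le_of_forall_gt_imp_ge_of_dense fun c hc => ?_
  rw [div_le_iff₀ hE]
  exact (halanay_lt_of_lt hτ.le hB hδ.le hδA (hsup_nonneg.trans_lt hc) hycont hyderiv hyineq
    (fun s hs => (hle_sup s hs).trans_lt hc) t (by linarith)).le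
end

section
/- Let d₁, ..., d_s ≥ 0, 0 < k ≤ 1, and suppose real sequences satisfy ‖w_{n+1}‖² ≤ k‖w_n‖² + ∑_{j=1}^s d_j ( c₀ ‖W_j^{(n)}‖² + (c₁/(m+1)) ∑_{q=0}^m ( a ‖W_j^{(n−q)}‖² + b ‖R_j^{(n−q)}‖² ) ) for all n ≥ 0, where c₀ ∈ ℝ, c₁, a, b ≥ 0, m ≥ 1. Then for all n, ‖w_{n+1}‖² ≤ ‖w_0‖² + ∑_{j=1}^s d_j [ (c₀ + c₁ a) ∑_{i=0}^n ‖W_j^{(i)}‖² + (c₁ a m / 2) max_{−m≤i≤−1} ‖W_j^{(i)}‖² + c₁ b ∑_{i=0}^n ‖R_j^{(i)}‖² + (c₁ b m / 2) max_{−m≤i≤−1} ‖R_j^{(i)}‖² ]. -/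
open Finset

/-!
Since `k ≤ 1` and `x ≥ 0`, the one-step bound telescopes to `x (n+1) ≤ x 0 + ∑_{i ≤ n} Sᵢ`.
After exchanging the sums over `i` and `q`, the `q`-fold delayed sum `∑_{i ≤ n} χ (i - q)` is
at most the undelayed sum plus `q` initial values, each bounded by the maximum `M` over `[-m, -1]`.
Summing over `q ≤ m` gives `(m + 1) ∑ χ + m (m + 1) / 2 * M`, and the averaging factor
`1 / (m + 1)` turns this into the coefficients of the claim.
-/

theorem le_add_sum_of_le_add {α : Type*} [AddCommGroup α] [PartialOrder α] [IsOrderedAddMonoid α]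
    {u f : ℕ → α} (h : ∀ n, u (n + 1) ≤ u n + f n) (n : ℕ) :
    u n ≤ u 0 + ∑ i ∈ range n, f i := by
  have := sum_le_sum fun i (_ : i ∈ range n) => sub_le_iff_le_add'.2 (h i)
  rw [sum_range_sub] at this
  exact sub_le_iff_le_add'.1 this

theorem le_biSup_of_mem {ι α : Type*} [ConditionallyCompleteLattice α] (f : ι → α) {s : Finset ι} {i : ι} (hi : i ∈ s) :
    f i ≤ ⨆ j ∈ s, f j :=
  le_ciSup₂ (f := fun j (_ : j ∈ s) => f j) ((s.finite_toSet.image f).bddAbove.mono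
    (Set.iUnion_subset fun _ => Set.range_subset_iff.2 fun hj => Set.mem_image_of_mem f hj)) i hi

section DelaySums

variable {χ : ℤ → ℝ} {m : ℕ} {M : ℝ}

theorem sum_range_shift_le (hχ : ∀ i, 0 ≤ χ i) (n q : ℕ) :
    ∑ i ∈ range n, χ (i - q) ≤ ∑ i ∈ range q, χ (i - q) + ∑ i ∈ range n, χ i :=
  calc ∑ i ∈ range n, χ (i - q) ≤ ∑ i ∈ range (q + n), χ (i - q) :=
        sum_le_sum_of_subset_of_nonneg (range_subset_range.2 (by omega)) fun _ _ _ => hχ _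
    _ = _ := by rw [sum_range_add]; push_cast; simp

theorem sum_range_shift_le_mul (hM : ∀ i ∈ Icc (-(m : ℤ)) (-1), χ i ≤ M) {q : ℕ} (hq : q ≤ m) :
    ∑ i ∈ range q, χ (i - q) ≤ q * M :=
  calc ∑ i ∈ range q, χ (i - q) ≤ ∑ _i ∈ range q, M :=
        sum_le_sum fun i hi => hM _ (by simp only [mem_range] at hi; simp only [mem_Icc]; omega)
    _ = q * M := by simp

theorem sum_sum_shift_le (hχ : ∀ i, 0 ≤ χ i) (hM : ∀ i ∈ Icc (-(m : ℤ)) (-1), χ i ≤ M) (n : ℕ) :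
    ∑ i ∈ range n, ∑ q ∈ range (m + 1), χ (i - q)
      ≤ (m + 1) * ∑ i ∈ range n, χ i + m * (m + 1) / 2 * M := by
  have gauss : ∑ q ∈ range (m + 1), (q : ℝ) = m * (m + 1) / 2 := by
    have := congrArg (Nat.cast (R := ℝ)) (sum_range_id_mul_two (m + 1))
    push_cast at this
    linarith
  rw [sum_comm]
  calc _ ≤ ∑ q ∈ range (m + 1), (q * M + ∑ i ∈ range n, χ i) := sum_le_sum fun q hq => by
          have := sum_range_shift_le_mul hM (Nat.lt_succ_iff.1 (mem_range.1 hq))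
          have := sum_range_shift_le hχ n q
          linarith
    _ = _ := by
        rw [sum_add_distrib, ← sum_mul, gauss]
        simp only [sum_const, card_range, nsmul_eq_mul, Nat.cast_add, Nat.cast_one]
        ring

theorem sum_delay_average_le {c₀ c₁ a b : ℝ} (hc₁ : 0 ≤ c₁) (ha : 0 ≤ a) (hb : 0 ≤ b)
    {W R : ℤ → ℝ} (hW : ∀ i, 0 ≤ W i) (hR : ∀ i, 0 ≤ R i) {MW MR : ℝ}
    (hMW : ∀ i ∈ Icc (-(m : ℤ)) (-1), W i ≤ MW) (hMR : ∀ i ∈ Icc (-(m : ℤ)) (-1), R i ≤ MR)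
    (n : ℕ) :
    ∑ i ∈ range n, (c₀ * W i + c₁ / (m + 1) *
        ∑ q ∈ range (m + 1), (a * W (i - q) + b * R (i - q)))
      ≤ (c₀ + c₁ * a) * ∑ i ∈ range n, W i + c₁ * a * m / 2 * MW
        + c₁ * b * ∑ i ∈ range n, R i + c₁ * b * m / 2 * MR := by
  simp only [sum_add_distrib, ← mul_sum]
  calc _ ≤ c₀ * ∑ i ∈ range n, W i + c₁ / (m + 1) *
          (a * ((m + 1) * ∑ i ∈ range n, W i + m * (m + 1) / 2 * MW)
            + b * ((m + 1) * ∑ i ∈ range n, R i + m * (m + 1) / 2 * MR)) := by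
        gcongr
        exacts [sum_sum_shift_le hW hMW n, sum_sum_shift_le hR hMR n]
    _ = _ := by field_simp; ring

end DelaySums

theorem stmt_16_general (s : ℕ) (d : Fin s → ℝ) (hd : ∀ j, 0 ≤ d j)
    (k : ℝ) (hk1 : k ≤ 1)
    (c₀ c₁ a b : ℝ) (hc₁ : 0 ≤ c₁) (ha : 0 ≤ a) (hb : 0 ≤ b)
    (m : ℕ)
    (x : ℕ → ℝ) (hx : ∀ n, 0 ≤ x n)
    (W R : Fin s → ℤ → ℝ) (hW : ∀ j q, 0 ≤ W j q) (hR : ∀ j q, 0 ≤ R j q)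
    (hrec : ∀ n : ℕ, x (n + 1) ≤ k * x n + ∑ j, d j *
      (c₀ * W j (n : ℤ) + (c₁ / (m + 1 : ℝ)) *
        ∑ q ∈ range (m + 1), (a * W j ((n : ℤ) - q) + b * R j ((n : ℤ) - q)))) :
    ∀ n : ℕ, x (n + 1) ≤ x 0 + ∑ j, d j *
      ((c₀ + c₁ * a) * ∑ i ∈ range (n + 1), W j (i : ℤ)
        + (c₁ * a * m / 2) * (⨆ i ∈ Finset.Icc (-(m : ℤ)) (-1), W j i)
        + c₁ * b * ∑ i ∈ range (n + 1), R j (i : ℤ)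
        + (c₁ * b * m / 2) * (⨆ i ∈ Finset.Icc (-(m : ℤ)) (-1), R j i)) := by
  intro n
  have hstep := fun i => (hrec i).trans (add_le_add_left (mul_le_of_le_one_left (hx i) hk1) _)
  refine (le_add_sum_of_le_add hstep (n + 1)).trans (add_le_add_right ?_ _)
  rw [sum_comm]
  simp only [← mul_sum]
  refine sum_le_sum fun j _ => mul_le_mul_of_nonneg_left ?_ (hd j)
  exact sum_delay_average_le hc₁ ha hb (hW j) (hR j)
    (fun i hi => le_biSup_of_mem (W j) hi) (fun i hi => le_biSup_of_mem (R j) hi) (n + 1)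

/-- Abstract form of the passage from (4.3) to (4.4): one-step bound plus the
double-sum rearrangement lemma gives the cumulative bound. -/
theorem stmt_16 (s : ℕ) (d : Fin s → ℝ) (hd : ∀ j, 0 ≤ d j)
    (k : ℝ) (hk0 : 0 < k) (hk1 : k ≤ 1)
    (c₀ c₁ a b : ℝ) (hc₁ : 0 ≤ c₁) (ha : 0 ≤ a) (hb : 0 ≤ b)
    (m : ℕ) (hm : 1 ≤ m)
    (x : ℕ → ℝ) (hx : ∀ n, 0 ≤ x n)
    (W R : Fin s → ℤ → ℝ) (hW : ∀ j q, 0 ≤ W j q) (hR : ∀ j q, 0 ≤ R j q)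
    (hrec : ∀ n : ℕ, x (n + 1) ≤ k * x n + ∑ j, d j *
      (c₀ * W j (n : ℤ) + (c₁ / (m + 1 : ℝ)) *
        ∑ q ∈ range (m + 1), (a * W j ((n : ℤ) - q) + b * R j ((n : ℤ) - q)))) :
    ∀ n : ℕ, x (n + 1) ≤ x 0 + ∑ j, d j *
      ((c₀ + c₁ * a) * ∑ i ∈ range (n + 1), W j (i : ℤ)
        + (c₁ * a * m / 2) * (⨆ i ∈ Finset.Icc (-(m : ℤ)) (-1), W j i)
        + c₁ * b * ∑ i ∈ range (n + 1), R j (i : ℤ)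
        + (c₁ * b * m / 2) * (⨆ i ∈ Finset.Icc (-(m : ℤ)) (-1), R j i)) :=
  stmt_16_general s d hd k hk1 c₀ c₁ a b hc₁ ha hb m x hx W R hW hR hrec
end
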